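/- arXiv:1812.11774 — 2 statements merged into one kernel-verified Lean document; each statement's English description precedes it below -/
import Mathlib

section
/- Let G(U, V; E) be a bipartite graph with parts of size n containing a perfect matching M, and fix an index i with 1 ≤ i ≤ n. Fix pairwise distinct prices p_j ∈ [1/e, 1] for all j ≠ i, let w be uniformly distributed on [0, 1], and set p_i = e^{w−1}. Then the expectation over w of r(v_i) + y(M(v_i)), where r and y are the revenue and utility in the greedy-by-price process on G with prices p_1, …, p_n and M(v_i) ∈ U is the vertex matched to v_i under M, is at least 1 − 1/e. -/
open scoped Classical

noncomputable section

/-- The element of `c` minimizing `key`, if `c` is nonempty. -/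
def pickMin {n : ℕ} {α : Type*} [LinearOrder α] (key : Fin n → α)
    (c : Finset (Fin n)) : Option (Fin n) :=
  if h : c.Nonempty then some (Classical.choose (Finset.exists_min_image c key h)) else none

/-- The set of matched `V`-vertices after the first `j` arrivals of the online greedy
process on the bipartite graph with `U`-side arrival order `u_0, u_1, …` and adjacency
`adj`, in which each arriving `u_j` is matched to its currently unmatched neighbor
minimizing `key` (if any). -/
def greedyRun {n : ℕ} {α : Type*} [LinearOrder α] (adj : ℕ → Fin n → Prop)
    (key : Fin n → α) : ℕ → Finset (Fin n)
  | 0 => ∅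
  | j + 1 =>
    match pickMin key ((Finset.univ.filter fun i => adj j i) \ greedyRun adj key j) with
    | some v => insert v (greedyRun adj key j)
    | none => greedyRun adj key j

/-- The `V`-vertex that the arriving vertex `u_j` (0-indexed) gets matched to, if any. -/
def greedyMatchU {n : ℕ} {α : Type*} [LinearOrder α] (adj : ℕ → Fin n → Prop)
    (key : Fin n → α) (j : ℕ) : Option (Fin n) :=
  pickMin key ((Finset.univ.filter fun i => adj j i) \ greedyRun adj key j)

/-- Adjacency of the monotone graph `MonotoneG` (0-indexed):
`u_j` is adjacent to `v_i` iff `j ≤ i`. -/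
def monoAdj (n : ℕ) : ℕ → Fin n → Prop := fun j i => j ≤ (i : ℕ)

/-- The set of matched `V`-vertices produced by the Ranking greedy process on `MonotoneG`
with permutation `π` (where `π i` is the rank of `v_i`, 0-indexed). -/
def rankMatched (n : ℕ) (π : Equiv.Perm (Fin n)) : Finset (Fin n) :=
  greedyRun (monoAdj n) (fun i => π i) n

/-- `x(π)`: the number of edges of the matching produced by Ranking on `MonotoneG`. -/
def xSize (n : ℕ) (π : Equiv.Perm (Fin n)) : ℕ := (rankMatched n π).card

/-- `a(n) = Σ_π x(π)`, over all `n!` permutations. -/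
def aVal (n : ℕ) : ℕ := ∑ π : Equiv.Perm (Fin n), xSize n π

/-- `a(n,i)` (with `i` 1-indexed): the number of permutations `π` of `{1,…,n}` for which
the vertex of rank `i` under `π` is matched by the Ranking greedy process on `MonotoneG`. -/
def aIdx (n i : ℕ) : ℕ :=
  (Finset.univ.filter fun π : Equiv.Perm (Fin n) =>
    ∃ v : Fin n, (π v : ℕ) = i - 1 ∧ v ∈ rankMatched n π).card

/-- `d(m,i)` (with `i` 1-indexed): the number of permutations of `{1,…,m}` all of whose
fixed points (if any) lie among the first `i` items. -/
def dIdx (m i : ℕ) : ℕ :=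
  (Finset.univ.filter fun σ : Equiv.Perm (Fin m) => ∀ x, σ x = x → (x : ℕ) < i).card

/-- `d(m)`: the number of derangements of `{1,…,m}`. -/
def numDer (m : ℕ) : ℕ :=
  (Finset.univ.filter fun σ : Equiv.Perm (Fin m) => ∀ x, σ x ≠ x).card

/-- The key for the greedy-by-price process: buy the cheapest available item,
breaking ties in favor of the smaller index. -/
def priceKey {n : ℕ} (p : Fin n → ℝ) : Fin n → Lex (ℝ × ℕ) := fun i => toLex (p i, (i : ℕ))

/-- The utility `y(u_j)` of buyer `u_j` (0-indexed) in the greedy-by-price process: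
`1 - p v` if `u_j` buys item `v`, and `0` if `u_j` remains unmatched. -/
def utility (n : ℕ) (adj : ℕ → Fin n → Prop) (p : Fin n → ℝ) (j : ℕ) : ℝ :=
  (greedyMatchU adj (priceKey p) j).elim 0 (fun v => 1 - p v)

/-- The revenue `r(v)` from item `v` in the greedy-by-price process:
`p v` if `v` is sold, and `0` otherwise. -/
def revenue (n : ℕ) (adj : ℕ → Fin n → Prop) (p : Fin n → ℝ) (v : Fin n) : ℝ :=
  if v ∈ greedyRun adj (priceKey p) n then p v else 0

/-- The `m`-th harmonic number `H_m = Σ_{i=1}^m 1/i` (with `H_0 = 0`). -/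
def harm (m : ℕ) : ℝ := ∑ i ∈ Finset.range m, (1 : ℝ) / (i + 1)

/-!
Let `u = M(v_i)` and let `p*` be the price of the item `u` buys when `v_i` is deleted from the
graph (`p* = 1` if `u` then stays unmatched). Deleting `v_i` never leaves more items available
to a buyer: at every step the items sold in `G` are among those sold in `G - v_i` together with
`v_i`. Hence `u` always gets utility at least `1 - p*`. Moreover `v_i` is sold whenever
`p_i < p*`: if it were not, both processes would run identically, and `u`, who sees `v_i`
available, would buy an item no more expensive than `v_i`. So
`r(v_i) + y(u) ≥ p_i [p_i < p*] + 1 - p*`, and for `p_i = e^{w-1}` the right side integrates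
to `(p* - 1/e) + (1 - p*)`.
-/

open Function Real MeasureTheory Set

def deleteVertex {n : ℕ} (adj : ℕ → Fin n → Prop) (i : Fin n) : ℕ → Fin n → Prop :=
  fun j v => adj j v ∧ v ≠ i

def greedyAvail {n : ℕ} {α : Type*} [LinearOrder α] (adj : ℕ → Fin n → Prop)
    (key : Fin n → α) (j : ℕ) : Finset (Fin n) :=
  (Finset.univ.filter fun v => adj j v) \ greedyRun adj key j

section PickMin
variable {n : ℕ} {α : Type*} [LinearOrder α] {κ κ' : Fin n → α} {c c' : Finset (Fin n)}
  {v w : Fin n}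

lemma pickMin_spec (h : pickMin κ c = some v) : v ∈ c ∧ ∀ u ∈ c, κ v ≤ κ u := by
  unfold pickMin at h
  split at h
  · cases h
    exact Classical.choose_spec (Finset.exists_min_image c κ ‹_›)
  · cases h

lemma pickMin_eq_none_iff : pickMin κ c = none ↔ c = ∅ := by
  unfold pickMin
  split <;> simp_all [← Finset.not_nonempty_iff_eq_empty]

lemma exists_pickMin_le (hw : w ∈ c) : ∃ v, pickMin κ c = some v ∧ κ v ≤ κ w := by
  cases h : pickMin κ c with
  | none => simp [pickMin_eq_none_iff.mp h] at hw
  | some v => exact ⟨v, rfl, (pickMin_spec h).2 w hw⟩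

lemma pickMin_eq_some (hκ : Injective κ) (hv : v ∈ c) (hmin : ∀ u ∈ c, κ v ≤ κ u) :
    pickMin κ c = some v := by
  obtain ⟨u, hu, hle⟩ := exists_pickMin_le (κ := κ) hv
  rwa [hκ (le_antisymm hle (hmin u (pickMin_spec hu).1))] at hu

lemma exists_pickMin_le_of_subset (hsub : c' ⊆ c) (h : pickMin κ c' = some w) :
    ∃ v, pickMin κ c = some v ∧ κ v ≤ κ w :=
  exists_pickMin_le (hsub (pickMin_spec h).1)

lemma pickMin_of_subset (hκ : Injective κ) (hsub : c' ⊆ c) (h : pickMin κ c = some v)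
    (hv : v ∈ c') : pickMin κ c' = some v :=
  pickMin_eq_some hκ hv fun u hu => (pickMin_spec h).2 u (hsub hu)

lemma pickMin_erase (hκ : Injective κ) (h : pickMin κ c ≠ some w) :
    pickMin κ (c.erase w) = pickMin κ c := by
  cases hc : pickMin κ c with
  | none => rw [pickMin_eq_none_iff] at hc ⊢; simp [hc]
  | some v =>
    have hvw : v ≠ w := fun hvw => h (hvw ▸ hc)
    exact pickMin_of_subset hκ (c.erase_subset w) hc
      (Finset.mem_erase.mpr ⟨hvw, (pickMin_spec hc).1⟩)

lemma pickMin_congr (hκ' : Injective κ') (h : ∀ a ∈ c, ∀ b ∈ c, κ a ≤ κ b ↔ κ' a ≤ κ' b) :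
    pickMin κ c = pickMin κ' c := by
  cases hc : pickMin κ c with
  | none => exact (pickMin_eq_none_iff.mpr (pickMin_eq_none_iff.mp hc)).symm
  | some v =>
    obtain ⟨hv, hmin⟩ := pickMin_spec hc
    exact (pickMin_eq_some hκ' hv fun u hu => (h v hv u hu).mp (hmin u hu)).symm

end PickMin

section GreedyRun
variable {n : ℕ} {α : Type*} [LinearOrder α] {adj : ℕ → Fin n → Prop} {κ κ' : Fin n → α}
  {i v w : Fin n} {j : ℕ}

lemma greedyMatchU_eq_pickMin : greedyMatchU adj κ j = pickMin κ (greedyAvail adj κ j) := rfl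

lemma mem_greedyAvail : v ∈ greedyAvail adj κ j ↔ adj j v ∧ v ∉ greedyRun adj κ j := by
  simp [greedyAvail]

lemma greedyRun_succ :
    greedyRun adj κ (j + 1) = greedyRun adj κ j ∪ (greedyMatchU adj κ j).toFinset := by
  change (match greedyMatchU adj κ j with
    | some v => insert v (greedyRun adj κ j)
    | none => greedyRun adj κ j) = _
  cases greedyMatchU adj κ j <;> simp

lemma greedyRun_mono : Monotone (greedyRun adj κ) :=
  monotone_nat_of_le_succ fun j => by rw [greedyRun_succ]; exact Finset.subset_union_left

lemma mem_greedyRun_succ_of_greedyMatchU (h : greedyMatchU adj κ j = some v) :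
    v ∈ greedyRun adj κ (j + 1) := by
  simp [greedyRun_succ, h]

lemma greedyMatchU_congr_of_greedyRun_eq (hκ' : Injective κ')
    (h : ∀ j a b, adj j a → adj j b → (κ a ≤ κ b ↔ κ' a ≤ κ' b))
    (hrun : greedyRun adj κ j = greedyRun adj κ' j) :
    greedyMatchU adj κ j = greedyMatchU adj κ' j := by
  rw [greedyMatchU_eq_pickMin, greedyMatchU_eq_pickMin, greedyAvail, greedyAvail, hrun]
  refine pickMin_congr hκ' fun a ha b hb => h j a b ?_ ?_ <;> simp_all

lemma greedyRun_congr (hκ' : Injective κ')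
    (h : ∀ j a b, adj j a → adj j b → (κ a ≤ κ b ↔ κ' a ≤ κ' b)) :
    ∀ j, greedyRun adj κ j = greedyRun adj κ' j
  | 0 => rfl
  | j + 1 => by
    have hrun := greedyRun_congr hκ' h j
    rw [greedyRun_succ, greedyRun_succ, hrun, greedyMatchU_congr_of_greedyRun_eq hκ' h hrun]

lemma greedyMatchU_congr (hκ' : Injective κ')
    (h : ∀ j a b, adj j a → adj j b → (κ a ≤ κ b ↔ κ' a ≤ κ' b)) (j : ℕ) :
    greedyMatchU adj κ j = greedyMatchU adj κ' j :=
  greedyMatchU_congr_of_greedyRun_eq hκ' h (greedyRun_congr hκ' h j)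

lemma ne_of_greedyMatchU_deleteVertex (h : greedyMatchU (deleteVertex adj i) κ j = some w) :
    w ≠ i :=
  (mem_greedyAvail.mp (pickMin_spec h).1).1.2

lemma greedyAvail_deleteVertex_subset
    (h : greedyRun adj κ j ⊆ insert i (greedyRun (deleteVertex adj i) κ j)) :
    greedyAvail (deleteVertex adj i) κ j ⊆ greedyAvail adj κ j := by
  intro v hv
  obtain ⟨⟨hadj, hvi⟩, hvB⟩ := mem_greedyAvail.mp hv
  refine mem_greedyAvail.mpr ⟨hadj, fun hvA => ?_⟩
  rcases Finset.mem_insert.mp (h hvA) with hvi' | hvB'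
  exacts [hvi hvi', hvB hvB']

lemma greedyRun_subset_insert_deleteVertex (hκ : Injective κ) :
    ∀ j, greedyRun adj κ j ⊆ insert i (greedyRun (deleteVertex adj i) κ j)
  | 0 => by simp [greedyRun]
  | j + 1 => by
    have ih := greedyRun_subset_insert_deleteVertex hκ j
    have hmono : insert i (greedyRun (deleteVertex adj i) κ j) ⊆
        insert i (greedyRun (deleteVertex adj i) κ (j + 1)) :=
      Finset.insert_subset_insert i (greedyRun_mono j.le_succ)
    rw [greedyRun_succ (j := j)]
    cases hA : greedyMatchU adj κ j with
    | none => simpa using ih.trans hmono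
    | some v =>
      refine Finset.union_subset (ih.trans hmono) ?_
      by_cases hv : v ∈ insert i (greedyRun (deleteVertex adj i) κ j)
      · simpa using hmono hv
      · have hvB : v ∈ greedyAvail (deleteVertex adj i) κ j := by
          simp only [Finset.mem_insert, not_or] at hv
          exact mem_greedyAvail.mpr ⟨⟨(mem_greedyAvail.mp (pickMin_spec hA).1).1, hv.1⟩, hv.2⟩
        have hB := pickMin_of_subset hκ (greedyAvail_deleteVertex_subset ih) hA hvB
        simpa using Finset.mem_insert_of_mem (mem_greedyRun_succ_of_greedyMatchU hB)

lemma exists_greedyMatchU_le_of_deleteVertex (hκ : Injective κ)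
    (h : greedyMatchU (deleteVertex adj i) κ j = some w) :
    ∃ v, greedyMatchU adj κ j = some v ∧ κ v ≤ κ w :=
  exists_pickMin_le_of_subset
    (greedyAvail_deleteVertex_subset (greedyRun_subset_insert_deleteVertex hκ j)) h

lemma greedyMatchU_deleteVertex_eq (hκ : Injective κ)
    (hrun : greedyRun (deleteVertex adj i) κ j = greedyRun adj κ j)
    (hi : i ∉ greedyRun adj κ (j + 1)) :
    greedyMatchU (deleteVertex adj i) κ j = greedyMatchU adj κ j := by
  have havail : greedyAvail (deleteVertex adj i) κ j = (greedyAvail adj κ j).erase i := by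
    ext v
    simp only [mem_greedyAvail, Finset.mem_erase, deleteVertex, hrun]
    tauto
  rw [greedyMatchU_eq_pickMin, havail]
  exact pickMin_erase hκ fun h => hi (mem_greedyRun_succ_of_greedyMatchU h)

lemma greedyRun_deleteVertex_eq_of_not_mem (hκ : Injective κ) :
    ∀ {j}, i ∉ greedyRun adj κ j → greedyRun (deleteVertex adj i) κ j = greedyRun adj κ j
  | 0, _ => rfl
  | j + 1, hi => by
    have hrun := greedyRun_deleteVertex_eq_of_not_mem hκ fun h => hi (greedyRun_mono j.le_succ h)
    rw [greedyRun_succ, greedyRun_succ, hrun, greedyMatchU_deleteVertex_eq hκ hrun hi]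

lemma greedyMatchU_deleteVertex_eq_of_not_mem (hκ : Injective κ)
    (hi : i ∉ greedyRun adj κ (j + 1)) :
    greedyMatchU (deleteVertex adj i) κ j = greedyMatchU adj κ j :=
  greedyMatchU_deleteVertex_eq hκ
    (greedyRun_deleteVertex_eq_of_not_mem hκ fun h => hi (greedyRun_mono j.le_succ h)) hi

end GreedyRun

section PriceKey
variable {n : ℕ} {q q' : Fin n → ℝ} {a b : Fin n}

lemma priceKey_injective (q : Fin n → ℝ) : Injective (priceKey q) := fun a b h =>
  Fin.ext (by simpa [priceKey] using congrArg (fun z => (ofLex z).2) h)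

lemma le_of_priceKey_le (h : priceKey q a ≤ priceKey q b) : q a ≤ q b := by
  rcases Prod.Lex.le_iff.mp h with h | h
  exacts [h.le, h.1.le]

lemma priceKey_le_priceKey_iff_of_cmp (h : cmp (q a) (q b) = cmp (q' a) (q' b)) :
    priceKey q a ≤ priceKey q b ↔ priceKey q' a ≤ priceKey q' b := by
  simp only [priceKey, Prod.Lex.le_iff, ofLex_toLex, ← cmp_eq_lt_iff, ← cmp_eq_eq_iff, h]

lemma cmp_update_eq_of_cmp {p : Fin n → ℝ} {i : Fin n} {x y : ℝ}
    (h : ∀ j, cmp x (p j) = cmp y (p j)) (a b : Fin n) :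
    cmp (update p i x a) (update p i x b) = cmp (update p i y a) (update p i y b) := by
  by_cases ha : a = i <;> by_cases hb : b = i
  · simp [ha, hb]
  · simp only [ha, update_self, update_of_ne hb, h]
  · simp only [hb, update_self, update_of_ne ha]
    rw [← cmp_swap x, ← cmp_swap y, h]
  · simp only [update_of_ne ha, update_of_ne hb]

end PriceKey

lemma measurableSet_cmp_eq (c : ℝ) (o : Ordering) : MeasurableSet {x : ℝ | cmp x c = o} := by
  cases o <;> simp only [cmp_eq_lt_iff, cmp_eq_eq_iff, cmp_eq_gt_iff]
  exacts [measurableSet_Iio, measurableSet_singleton c, measurableSet_Ioi]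

lemma measurable_of_cmp_invariant {m : ℕ} {β : Type*} [MeasurableSpace β] (g : Fin m → ℝ)
    {f : ℝ → β} (hf : ∀ x y, (∀ j, cmp x (g j) = cmp y (g j)) → f x = f y) : Measurable f := by
  intro s _
  have hpre : f ⁻¹' s = ⋃ (o : Fin m → Ordering) (_ : ∃ z ∈ f ⁻¹' s, ∀ j, cmp z (g j) = o j),
      ⋂ j, {x | cmp x (g j) = o j} := by
    ext x
    simp only [mem_preimage, mem_iUnion, mem_iInter, mem_ofPred_eq]
    refine ⟨fun hx => ⟨_, ⟨x, hx, fun _ => rfl⟩, fun _ => rfl⟩, ?_⟩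
    rintro ⟨o, ⟨z, hz, hzo⟩, hxo⟩
    rwa [← hf z x fun j => (hzo j).trans (hxo j).symm]
  rw [hpre]
  exact .iUnion fun o => .iUnion fun _ => .iInter fun j => measurableSet_cmp_eq (g j) (o j)

lemma one_sub_inv_exp_le_integral {F : ℝ → ℝ} {c : ℝ} (hc : 1 / exp 1 ≤ c) (hc1 : c ≤ 1)
    (hF : IntervalIntegrable F volume 0 1) (hlow : ∀ w ∈ Ioo (0 : ℝ) 1, 1 - c ≤ F w)
    (hhigh : ∀ w ∈ Ioo (0 : ℝ) 1, exp (w - 1) < c → exp (w - 1) + (1 - c) ≤ F w) :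
    1 - 1 / exp 1 ≤ ∫ w in (0 : ℝ)..1, F w := by
  have hc0 : 0 < c := lt_of_lt_of_le (by positivity) hc
  set t := 1 + log c
  have ht : exp (t - 1) = c := by simp [t, exp_log hc0]
  have ht0 : 0 ≤ t := by
    have := log_le_log (by positivity) hc
    rw [one_div, log_inv, log_exp] at this
    linarith
  have ht1 : t ≤ 1 := by linarith [log_nonpos hc0.le hc1]
  have hsub₁ : uIcc 0 t ⊆ uIcc (0 : ℝ) 1 := uIcc_subset_uIcc left_mem_uIcc (mem_uIcc_of_le ht0 ht1)
  have hsub₂ : uIcc t 1 ⊆ uIcc (0 : ℝ) 1 := uIcc_subset_uIcc (mem_uIcc_of_le ht0 ht1) right_mem_uIcc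
  have hexp : IntervalIntegrable (fun w => exp (w - 1)) volume 0 t :=
    (continuous_exp.comp (continuous_sub_right 1)).intervalIntegrable 0 t
  have h₁ : ∫ w in (0 : ℝ)..t, (exp (w - 1) + (1 - c)) ≤ ∫ w in (0 : ℝ)..t, F w :=
    intervalIntegral.integral_mono_on_of_le_Ioo ht0 (hexp.add intervalIntegrable_const)
      (hF.mono_set hsub₁) fun w hw => hhigh w ⟨hw.1, hw.2.trans_le ht1⟩
        (ht ▸ exp_lt_exp.mpr (by linarith [hw.2]))
  have h₂ : ∫ _ in t..(1 : ℝ), (1 - c) ≤ ∫ w in t..(1 : ℝ), F w :=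
    intervalIntegral.integral_mono_on_of_le_Ioo ht1 intervalIntegrable_const
      (hF.mono_set hsub₂) fun w hw => hlow w ⟨ht0.trans_lt hw.1, hw.2⟩
  have hval : ∫ w in (0 : ℝ)..t, (exp (w - 1) + (1 - c)) = c - 1 / exp 1 + t * (1 - c) := by
    rw [intervalIntegral.integral_add hexp intervalIntegrable_const,
      intervalIntegral.integral_comp_sub_right (fun x => exp x), integral_exp,
      intervalIntegral.integral_const, show t - 1 = log c by ring, exp_log hc0, zero_sub,
      exp_neg, one_div, smul_eq_mul, sub_zero]
  rw [← intervalIntegral.integral_add_adjacent_intervals (hF.mono_set hsub₁) (hF.mono_set hsub₂)]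
  rw [hval] at h₁
  rw [intervalIntegral.integral_const, smul_eq_mul] at h₂
  linarith

def priceWithout {n : ℕ} (adj : ℕ → Fin n → Prop) (p : Fin n → ℝ) (i : Fin n) (j : ℕ) : ℝ :=
  (greedyMatchU (deleteVertex adj i) (priceKey p) j).elim 1 p

section GreedyByPrice
variable {n : ℕ} {adj : ℕ → Fin n → Prop} {p q : Fin n → ℝ} {i v : Fin n} {j : ℕ} {x : ℝ}

lemma revenue_nonneg (h : 0 ≤ q v) : 0 ≤ revenue n adj q v := by
  unfold revenue; split_ifs <;> simp [h]

lemma revenue_le_one (h : q v ≤ 1) : revenue n adj q v ≤ 1 := by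
  unfold revenue; split_ifs <;> simp [h]

lemma utility_nonneg (hq : ∀ v, q v ≤ 1) : 0 ≤ utility n adj q j := by
  unfold utility
  cases greedyMatchU adj (priceKey q) j <;> simp [hq]

lemma utility_le_one (hq : ∀ v, 0 ≤ q v) : utility n adj q j ≤ 1 := by
  unfold utility
  cases greedyMatchU adj (priceKey q) j <;> simp [hq]

lemma abs_revenue_add_utility_le (hq : ∀ v, q v ∈ Icc 0 1) :
    |revenue n adj q v + utility n adj q j| ≤ 2 := by
  rw [abs_le]
  constructor <;> linarith [revenue_nonneg (adj := adj) (hq v).1,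
    revenue_le_one (adj := adj) (hq v).2, utility_nonneg (adj := adj) (j := j) fun v => (hq v).2,
    utility_le_one (adj := adj) (j := j) fun v => (hq v).1]

lemma greedyRun_update_eq_of_cmp {y : ℝ} (h : ∀ j, cmp x (p j) = cmp y (p j)) (k : ℕ) :
    greedyRun adj (priceKey (update p i x)) k = greedyRun adj (priceKey (update p i y)) k :=
  greedyRun_congr (priceKey_injective _)
    (fun _ a b _ _ => priceKey_le_priceKey_iff_of_cmp (cmp_update_eq_of_cmp h a b)) k

lemma greedyMatchU_update_eq_of_cmp {y : ℝ} (h : ∀ j, cmp x (p j) = cmp y (p j)) (k : ℕ) :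
    greedyMatchU adj (priceKey (update p i x)) k = greedyMatchU adj (priceKey (update p i y)) k :=
  greedyMatchU_congr (priceKey_injective _)
    (fun _ a b _ _ => priceKey_le_priceKey_iff_of_cmp (cmp_update_eq_of_cmp h a b)) k

lemma measurable_revenue_update : Measurable fun x => revenue n adj (update p i x) i := by
  simp only [revenue, update_self]
  refine Measurable.ite (measurableSet_setOfPred.mpr ?_) measurable_id measurable_const
  exact measurable_of_cmp_invariant p fun x y h => by rw [greedyRun_update_eq_of_cmp h]

lemma measurable_utility_update (j : ℕ) : Measurable fun x => utility n adj (update p i x) j := by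
  have hsum : (fun x => utility n adj (update p i x) j) = fun x => ∑ v,
      if greedyMatchU adj (priceKey (update p i x)) j = some v then 1 - update p i x v else 0 := by
    ext x
    unfold utility
    cases greedyMatchU adj (priceKey (update p i x)) j <;> simp
  rw [hsum]
  refine Finset.measurable_sum _ fun v _ => Measurable.ite (measurableSet_setOfPred.mpr ?_)
    (measurable_const.sub ((measurable_pi_apply v).comp (measurable_update p)))
    measurable_const
  exact measurable_of_cmp_invariant p fun x y h => by rw [greedyMatchU_update_eq_of_cmp h]

lemma greedyMatchU_deleteVertex_update (x : ℝ) (j : ℕ) :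
    greedyMatchU (deleteVertex adj i) (priceKey (update p i x)) j =
      greedyMatchU (deleteVertex adj i) (priceKey p) j :=
  greedyMatchU_congr (priceKey_injective p)
    (fun _ a b ha hb => by simp only [priceKey, update_of_ne ha.2, update_of_ne hb.2]) j

lemma priceWithout_mem_Icc {a : ℝ} (ha : a ≤ 1) (hp : ∀ v, v ≠ i → a ≤ p v ∧ p v ≤ 1)
    (j : ℕ) : priceWithout adj p i j ∈ Icc a 1 := by
  unfold priceWithout
  cases h : greedyMatchU (deleteVertex adj i) (priceKey p) j with
  | none => exact ⟨ha, le_rfl⟩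
  | some w => exact hp w (ne_of_greedyMatchU_deleteVertex h)

lemma one_sub_priceWithout_le_utility (hp : ∀ v, v ≠ i → p v ≤ 1) (hx : x ≤ 1) (j : ℕ) :
    1 - priceWithout adj p i j ≤ utility n adj (update p i x) j := by
  unfold priceWithout
  cases hB : greedyMatchU (deleteVertex adj i) (priceKey p) j with
  | none => simpa using utility_nonneg ((forall_update_iff p fun _ y => y ≤ 1).mpr ⟨hx, hp⟩)
  | some w =>
    have hwi := ne_of_greedyMatchU_deleteVertex hB
    rw [← greedyMatchU_deleteVertex_update x] at hB
    obtain ⟨v, hv, hle⟩ := exists_greedyMatchU_le_of_deleteVertex (priceKey_injective _) hB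
    have hprice := le_of_priceKey_le hle
    rw [update_of_ne hwi] at hprice
    simp only [utility, hv, Option.elim_some]
    linarith

lemma mem_greedyRun_update_of_lt_priceWithout (hj : j < n) (hadj : adj j i)
    (hx : x < priceWithout adj p i j) : i ∈ greedyRun adj (priceKey (update p i x)) n := by
  by_contra hsold
  set κ := priceKey (update p i x)
  have hj' : i ∉ greedyRun adj κ (j + 1) := fun h => hsold (greedyRun_mono hj h)
  have hiA : i ∈ greedyAvail adj κ j :=
    mem_greedyAvail.mpr ⟨hadj, fun h => hj' (greedyRun_mono j.le_succ h)⟩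
  obtain ⟨v, hv, hvi⟩ := exists_pickMin_le (κ := κ) hiA
  have hB := greedyMatchU_deleteVertex_eq_of_not_mem (priceKey_injective _) hj'
  rw [show greedyMatchU adj κ j = some v from hv, greedyMatchU_deleteVertex_update] at hB
  have hprice := le_of_priceKey_le hvi
  rw [update_of_ne (ne_of_greedyMatchU_deleteVertex hB), update_self] at hprice
  simp only [priceWithout, hB, Option.elim_some] at hx
  linarith

end GreedyByPrice

theorem stmt_18_general (n : ℕ) (adj : ℕ → Fin n → Prop) (p : Fin n → ℝ) (i : Fin n)
    (hp1 : ∀ j, j ≠ i → 1 / Real.exp 1 ≤ p j ∧ p j ≤ 1)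
    (M : Equiv.Perm (Fin n)) (hM : ∀ v : Fin n, adj ((M v : Fin n) : ℕ) v) :
    1 - 1 / Real.exp 1 ≤
      ∫ w in (0 : ℝ)..1,
        (revenue n adj (Function.update p i (Real.exp (w - 1))) i +
         utility n adj (Function.update p i (Real.exp (w - 1))) ((M i : Fin n) : ℕ)) := by
  set j := ((M i : Fin n) : ℕ)
  have he : 1 / exp 1 ≤ 1 := by rw [div_le_one (exp_pos 1)]; exact one_le_exp zero_le_one
  have hprice : ∀ w ∈ Ioo (0 : ℝ) 1, ∀ v, update p i (exp (w - 1)) v ∈ Icc 0 1 := by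
    intro w hw
    refine (forall_update_iff p fun _ y => y ∈ Icc 0 1).mpr ⟨⟨(exp_pos _).le,
      exp_le_one_iff.mpr (by linarith [hw.2])⟩, fun v hv => ⟨?_, (hp1 v hv).2⟩⟩
    exact (one_div_pos.mpr (exp_pos 1)).le.trans (hp1 v hv).1
  obtain ⟨hc, hc1⟩ := priceWithout_mem_Icc (adj := adj) he hp1 j
  have hutil := fun w (hw : w ∈ Ioo (0 : ℝ) 1) => one_sub_priceWithout_le_utility (adj := adj)
    (x := exp (w - 1)) (fun v hv => (hp1 v hv).2) (by simpa using (hprice w hw i).2) j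
  refine one_sub_inv_exp_le_integral hc hc1 ?_ (fun w hw => ?_) (fun w hw hlt => ?_)
  · refine (intervalIntegrable_iff_integrableOn_Ioo_of_le zero_le_one).mpr
      (Measure.integrableOn_of_bounded (M := 2) (by simp) ?_ ?_)
    · exact ((measurable_revenue_update.add (measurable_utility_update j)).comp
        (measurable_exp.comp (measurable_id.sub_const 1))).aestronglyMeasurable
    · exact ae_restrict_of_forall_mem measurableSet_Ioo fun w hw =>
        (Real.norm_eq_abs _).trans_le (abs_revenue_add_utility_le (hprice w hw))
  · linarith [revenue_nonneg (adj := adj) (hprice w hw i).1, hutil w hw]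
  · rw [revenue, if_pos (mem_greedyRun_update_of_lt_priceWithout (M i).isLt (hM i) hlt),
      update_self]
    linarith [hutil w hw]

/-- Let `G(U,V;E)` be a bipartite graph with parts of size `n` (vertex `u_j` of `U` is
0-indexed by the arrival step `j < n`) containing a perfect matching `M` (where `M v` is
the `U`-vertex matched to `v`), and fix an index `i`. Fix pairwise distinct prices
`p j ∈ [1/e, 1]` for all `j ≠ i`, let `w` be uniformly distributed on `[0,1]` and set
`p i = e^{w−1}`. Then the expectation over `w` of `r(v_i) + y(M(v_i))`, where `r` and `y`
are the revenue and utility in the greedy-by-price process on `G`, is at least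
`1 − 1/e`. -/
theorem stmt_18 (n : ℕ) (adj : ℕ → Fin n → Prop) (p : Fin n → ℝ) (i : Fin n)
    (hp1 : ∀ j, j ≠ i → 1 / Real.exp 1 ≤ p j ∧ p j ≤ 1)
    (hp2 : ∀ j k, j ≠ i → k ≠ i → j ≠ k → p j ≠ p k)
    (M : Equiv.Perm (Fin n)) (hM : ∀ v : Fin n, adj ((M v : Fin n) : ℕ) v) :
    1 - 1 / Real.exp 1 ≤
      ∫ w in (0 : ℝ)..1,
        (revenue n adj (Function.update p i (Real.exp (w - 1))) i +
         utility n adj (Function.update p i (Real.exp (w - 1))) ((M i : Fin n) : ℕ)) :=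
  stmt_18_general n adj p i hp1 M hM
end
end

section
/- Let MonotoneG be the monotone bipartite graph with parts of size n, with pairwise distinct prices p_1, …, p_n ∈ [1/e, 1] on V. Let y(u_j) be the utility of u_j in the greedy-by-price process on MonotoneG, and let y_{−v_n}(u_j) be its utility in the greedy-by-price process on the graph obtained by deleting v_n. Then Σ_{j=1}^{n} (y(u_j) − y_{−v_n}(u_j)) ≤ 1 − p_n. -/
open scoped Classical

noncomputable section

theorem pickMin_eq_none_iff_s19 {n : ℕ} {α : Type*} [LinearOrder α] (key : Fin n → α)
    (c : Finset (Fin n)) : pickMin key c = none ↔ c = ∅ := by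
  unfold pickMin
  split_ifs with h
  · simp [Finset.nonempty_iff_ne_empty.mp h]
  · simp [Finset.not_nonempty_iff_eq_empty.mp h]

theorem pickMin_eq_some_iff {n : ℕ} {α : Type*} [LinearOrder α] {key : Fin n → α}
    (hkey : Function.Injective key) {c : Finset (Fin n)} {m : Fin n} :
    pickMin key c = some m ↔ m ∈ c ∧ ∀ x ∈ c, key m ≤ key x := by
  unfold pickMin
  split_ifs with h
  · obtain ⟨h1, h2⟩ := Classical.choose_spec (Finset.exists_min_image c key h)
    constructor
    · rintro hsome
      injection hsome with hh
      subst hh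
      exact ⟨h1, h2⟩
    · rintro ⟨hm, hmin⟩
      have := hkey (le_antisymm (h2 m hm) (hmin _ h1))
      simp [this]
  · simp only [reduceCtorEq, false_iff, not_and]
    intro hm _
    exact h ⟨m, hm⟩

theorem pickMin_erase_s19 {n : ℕ} {α : Type*} [LinearOrder α] {key : Fin n → α}
    (hkey : Function.Injective key) {c : Finset (Fin n)} {m x : Fin n}
    (h : pickMin key c = some m) (hx : m ≠ x) : pickMin key (c.erase x) = some m := by
  obtain ⟨hm, hmin⟩ := (pickMin_eq_some_iff hkey).mp h
  exact (pickMin_eq_some_iff hkey).mpr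
    ⟨Finset.mem_erase.mpr ⟨hx, hm⟩, fun y hy => hmin y (Finset.mem_of_mem_erase hy)⟩

theorem greedyRun_succ_none {n : ℕ} {α : Type*} [LinearOrder α] {adj : ℕ → Fin n → Prop}
    {key : Fin n → α} {j : ℕ}
    (h : pickMin key ((Finset.univ.filter fun i => adj j i) \ greedyRun adj key j) = none) :
    greedyRun adj key (j + 1) = greedyRun adj key j := by
  rw [greedyRun, h]

theorem greedyRun_succ_some {n : ℕ} {α : Type*} [LinearOrder α] {adj : ℕ → Fin n → Prop}
    {key : Fin n → α} {j : ℕ} {v : Fin n}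
    (h : pickMin key ((Finset.univ.filter fun i => adj j i) \ greedyRun adj key j) = some v) :
    greedyRun adj key (j + 1) = insert v (greedyRun adj key j) := by
  rw [greedyRun, h]

theorem priceKey_injective_s19 {n : ℕ} (p : Fin n → ℝ) : Function.Injective (priceKey p) := by
  intro i j h
  have : ((ofLex (priceKey p i)).2 : ℕ) = (ofLex (priceKey p j)).2 := by rw [h]
  exact Fin.ext this

theorem utility_of_none {n : ℕ} {adj : ℕ → Fin n → Prop} {p : Fin n → ℝ} {j : ℕ}
    (h : pickMin (priceKey p)
      ((Finset.univ.filter fun i => adj j i) \ greedyRun adj (priceKey p) j) = none) :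
    utility n adj p j = 0 := by
  rw [utility, greedyMatchU, h]; rfl

theorem utility_of_some {n : ℕ} {adj : ℕ → Fin n → Prop} {p : Fin n → ℝ} {j : ℕ} {v : Fin n}
    (h : pickMin (priceKey p)
      ((Finset.univ.filter fun i => adj j i) \ greedyRun adj (priceKey p) j) = some v) :
    utility n adj p j = 1 - p v := by
  rw [utility, greedyMatchU, h]; rfl

/-- Candidate set for buyer `j`. -/
def cand {n : ℕ} {α : Type*} [LinearOrder α] (adj : ℕ → Fin n → Prop)
    (key : Fin n → α) (j : ℕ) : Finset (Fin n) :=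
  (Finset.univ.filter fun i => adj j i) \ greedyRun adj key j

theorem cand_def {n : ℕ} {α : Type*} [LinearOrder α] (adj : ℕ → Fin n → Prop)
    (key : Fin n → α) (j : ℕ) :
    greedyMatchU adj key j = pickMin key (cand adj key j) := rfl

theorem greedyRun_succ_none' {n : ℕ} {α : Type*} [LinearOrder α] {adj : ℕ → Fin n → Prop}
    {key : Fin n → α} {j : ℕ} (h : pickMin key (cand adj key j) = none) :
    greedyRun adj key (j + 1) = greedyRun adj key j := greedyRun_succ_none h

theorem greedyRun_succ_some' {n : ℕ} {α : Type*} [LinearOrder α] {adj : ℕ → Fin n → Prop}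
    {key : Fin n → α} {j : ℕ} {v : Fin n} (h : pickMin key (cand adj key j) = some v) :
    greedyRun adj key (j + 1) = insert v (greedyRun adj key j) := greedyRun_succ_some h

theorem utility_of_none' {n : ℕ} {adj : ℕ → Fin n → Prop} {p : Fin n → ℝ} {j : ℕ}
    (h : pickMin (priceKey p) (cand adj (priceKey p) j) = none) :
    utility n adj p j = 0 := utility_of_none h

theorem utility_of_some' {n : ℕ} {adj : ℕ → Fin n → Prop} {p : Fin n → ℝ} {j : ℕ} {v : Fin n}
    (h : pickMin (priceKey p) (cand adj (priceKey p) j) = some v) :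
    utility n adj p j = 1 - p v := utility_of_some h

theorem mem_cand {n : ℕ} {α : Type*} [LinearOrder α] {adj : ℕ → Fin n → Prop}
    {key : Fin n → α} {j : ℕ} {i : Fin n} :
    i ∈ cand adj key j ↔ adj j i ∧ i ∉ greedyRun adj key j := by
  simp [cand]

theorem inv_lemma (n : ℕ) (adj : ℕ → Fin n → Prop) (p : Fin n → ℝ) (w : Fin n) :
    ∀ j : ℕ,
    (greedyRun (fun a b => adj a b ∧ b ≠ w) (priceKey p) j
        = (greedyRun adj (priceKey p) j).erase w ∧
      ∑ t ∈ Finset.range j,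
          (utility n adj p t - utility n (fun a b => adj a b ∧ b ≠ w) p t)
        = (if w ∈ greedyRun adj (priceKey p) j then 1 - p w else 0))
    ∨ (∃ b, b ∉ greedyRun adj (priceKey p) j ∧ b ≠ w ∧ w ∈ greedyRun adj (priceKey p) j ∧
        greedyRun (fun a b => adj a b ∧ b ≠ w) (priceKey p) j
          = insert b ((greedyRun adj (priceKey p) j).erase w) ∧
        ∑ t ∈ Finset.range j,
            (utility n adj p t - utility n (fun a b => adj a b ∧ b ≠ w) p t)
          = p b - p w) := by
  have hkey : Function.Injective (priceKey p) := priceKey_injective_s19 p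
  set key := priceKey p with hkeyd
  set adj' : ℕ → Fin n → Prop := fun a b => adj a b ∧ b ≠ w with hadj'
  have hadj'ap : ∀ a b, adj' a b ↔ adj a b ∧ b ≠ w := fun a b => Iff.rfl
  intro j
  induction j with
  | zero =>
    left
    constructor
    · simp [greedyRun]
    · simp [greedyRun]
  | succ j ih =>
    have hsum := Finset.sum_range_succ
      (fun t => utility n adj p t - utility n adj' p t) j
    rcases ih with ⟨hR', hD⟩ | ⟨b, hbR, hbw, hwR, hR', hD⟩
    · -- inactive
      have hCC' : cand adj' key j = (cand adj key j).erase w := by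
        ext i
        simp only [mem_cand, hR', Finset.mem_erase, hadj'ap, not_and, not_not]
        constructor
        · rintro ⟨⟨ha, hne⟩, him⟩
          exact ⟨hne, ha, fun hiR => absurd (him hne) (by simp [hiR])⟩
        · rintro ⟨hne, ha, hiR⟩
          exact ⟨⟨ha, hne⟩, fun _ => hiR⟩
      rcases hm : pickMin key (cand adj key j) with _ | m
      · have hm' : pickMin key (cand adj' key j) = none := by
          rw [pickMin_eq_none_iff_s19, hCC', (pickMin_eq_none_iff_s19 _ _).mp hm]
          rfl
        left
        rw [greedyRun_succ_none' hm, greedyRun_succ_none' hm', hsum,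
          utility_of_none' hm, utility_of_none' hm']
        exact ⟨hR', by rw [hD]; ring⟩
      · have hmC := ((pickMin_eq_some_iff hkey).mp hm).1
        have hmR : m ∉ greedyRun adj key j := (mem_cand.mp hmC).2
        by_cases hmw : m = w
        · -- full run buys w
          subst hmw
          have hDz : (∑ t ∈ Finset.range j,
              (utility n adj p t - utility n adj' p t)) = 0 := by
            rw [hD, if_neg hmR]
          rcases hm2 : pickMin key (cand adj' key j) with _ | b
          · -- chain ends immediately
            left
            rw [greedyRun_succ_some' hm, greedyRun_succ_none' hm2, hsum,
              utility_of_some' hm, utility_of_none' hm2]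
            constructor
            · rw [hR', Finset.erase_insert_eq_erase]
            · rw [hDz, if_pos (Finset.mem_insert_self _ _)]; ring
          · -- chain starts with b
            right
            have hbC' := ((pickMin_eq_some_iff hkey).mp hm2).1
            rw [hCC'] at hbC'
            have hbne : b ≠ m := (Finset.mem_erase.mp hbC').1
            have hbR : b ∉ greedyRun adj key j :=
              (mem_cand.mp (Finset.mem_of_mem_erase hbC')).2
            refine ⟨b, ?_, hbne, ?_, ?_, ?_⟩
            · rw [greedyRun_succ_some' hm]
              simp [hbne, hbR]
            · rw [greedyRun_succ_some' hm]
              exact Finset.mem_insert_self _ _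
            · rw [greedyRun_succ_some' hm, greedyRun_succ_some' hm2, hR',
                Finset.erase_insert_eq_erase]
            · rw [hsum, utility_of_some' hm, utility_of_some' hm2, hDz]; ring
        · -- full run buys m ≠ w; reduced buys m too
          have hm2 : pickMin key (cand adj' key j) = some m := by
            rw [hCC']; exact pickMin_erase_s19 hkey hm hmw
          left
          rw [greedyRun_succ_some' hm, greedyRun_succ_some' hm2, hsum,
            utility_of_some' hm, utility_of_some' hm2]
          constructor
          · rw [hR', Finset.erase_insert_of_ne hmw]
          · rw [hD]
            have hiff : w ∈ insert m (greedyRun adj key j)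
                ↔ w ∈ greedyRun adj key j :=
              (Finset.mem_insert ..).trans (or_iff_right fun h => hmw h.symm)
            rw [if_congr hiff rfl rfl]; ring
    · -- active with extra b
      have hCC' : cand adj' key j = (cand adj key j).erase b := by
        ext i
        simp only [mem_cand, hR', Finset.mem_erase, hadj'ap, Finset.mem_insert,
          not_or, not_and, not_not]
        constructor
        · rintro ⟨⟨ha, hnw⟩, hnb, him⟩
          exact ⟨hnb, ha, fun hiR => absurd (him hnw) (by simp [hiR])⟩
        · rintro ⟨hnb, ha, hiR⟩
          have hnw : i ≠ w := fun h => hiR (h ▸ hwR)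
          exact ⟨⟨ha, hnw⟩, hnb, fun _ => hiR⟩
      rcases hm : pickMin key (cand adj key j) with _ | m
      · have hm' : pickMin key (cand adj' key j) = none := by
          rw [pickMin_eq_none_iff_s19, hCC', (pickMin_eq_none_iff_s19 _ _).mp hm]
          rfl
        right
        rw [greedyRun_succ_none' hm, greedyRun_succ_none' hm', hsum,
          utility_of_none' hm, utility_of_none' hm']
        exact ⟨b, hbR, hbw, hwR, hR', by rw [hD]; ring⟩
      · have hmC := ((pickMin_eq_some_iff hkey).mp hm).1
        have hmR : m ∉ greedyRun adj key j := (mem_cand.mp hmC).2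
        have hmw : m ≠ w := fun h => hmR (h ▸ hwR)
        by_cases hmb : m = b
        · -- full buys b
          subst hmb
          rcases hm2 : pickMin key (cand adj' key j) with _ | b'
          · -- chain ends
            left
            rw [greedyRun_succ_some' hm, greedyRun_succ_none' hm2, hsum,
              utility_of_some' hm, utility_of_none' hm2]
            constructor
            · rw [hR', Finset.erase_insert_of_ne hmw]
            · rw [if_pos (Finset.mem_insert_of_mem hwR), hD]; ring
          · -- chain continues with b'
            right
            have hbC' := ((pickMin_eq_some_iff hkey).mp hm2).1
            rw [hCC'] at hbC'
            have hbne : b' ≠ m := (Finset.mem_erase.mp hbC').1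
            have hb'R : b' ∉ greedyRun adj key j :=
              (mem_cand.mp (Finset.mem_of_mem_erase hbC')).2
            have hb'w : b' ≠ w := fun h => hb'R (h ▸ hwR)
            refine ⟨b', ?_, hb'w, ?_, ?_, ?_⟩
            · rw [greedyRun_succ_some' hm]
              simp [hbne, hb'R]
            · rw [greedyRun_succ_some' hm]
              exact Finset.mem_insert_of_mem hwR
            · rw [greedyRun_succ_some' hm, greedyRun_succ_some' hm2, hR',
                Finset.erase_insert_of_ne hmw]
            · rw [hsum, utility_of_some' hm, utility_of_some' hm2, hD]; ring
        · -- full and reduced both buy m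
          have hm2 : pickMin key (cand adj' key j) = some m := by
            rw [hCC']; exact pickMin_erase_s19 hkey hm hmb
          right
          refine ⟨b, ?_, hbw, ?_, ?_, ?_⟩
          · rw [greedyRun_succ_some' hm]
            exact fun h => (Finset.mem_insert.mp h).elim (fun h' => hmb h'.symm) hbR
          · rw [greedyRun_succ_some' hm]
            exact Finset.mem_insert_of_mem hwR
          · rw [greedyRun_succ_some' hm, greedyRun_succ_some' hm2, hR',
              Finset.erase_insert_of_ne hmw, Finset.insert_comm]
          · rw [hsum, utility_of_some' hm, utility_of_some' hm2, hD]; ring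


/-- Let `MonotoneG` be the monotone bipartite graph with parts of size `n`, with pairwise
distinct prices `p i ∈ [1/e, 1]` on `V`. Let `y(u_j)` be the utility of `u_j` in the
greedy-by-price process on `MonotoneG`, and `y_{−v_n}(u_j)` its utility in the
greedy-by-price process on the graph obtained by deleting the last vertex `v_n`
(0-indexed: `v_{n-1}`). Then `Σ_{j=1}^n (y(u_j) − y_{−v_n}(u_j)) ≤ 1 − p_n`. -/
theorem stmt_19 (n : ℕ) (hn : 1 ≤ n) (p : Fin n → ℝ)
    (hp1 : ∀ i, 1 / Real.exp 1 ≤ p i ∧ p i ≤ 1) (hp2 : Function.Injective p) :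
    ∑ j ∈ Finset.range n,
      (utility n (monoAdj n) p j -
       utility n (fun a b => monoAdj n a b ∧ b ≠ ⟨n - 1, by omega⟩) p j) ≤
    1 - p ⟨n - 1, by omega⟩ := by
  rcases inv_lemma n (monoAdj n) p ⟨n - 1, by omega⟩ n with ⟨_, hD⟩ | ⟨b, _, _, _, _, hD⟩
  · rw [hD]
    split_ifs
    · exact le_refl _
    · linarith [(hp1 ⟨n - 1, by omega⟩).2]
  · rw [hD]
    linarith [(hp1 b).2]
end
end
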